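/- An L-topological space (X, τ) is T₀ if and only if there exists a set I and an embedding of (X, τ) into L_S^I, the product of I copies of L_S. Moreover, when (X, τ) is T₀, the evaluation map e : X → L^τ defined by e(x)(μ) = μ(x) is an embedding of (X, τ) into L_S^τ. -/

import Mathlib

universe u v

/-- `τ` is an `L`-topology on `X`: a set of `L`-sets closed under arbitrary pointwise
suprema (including the empty one, `⊥`) and finite pointwise infima (including the
empty one, `⊤`). -/
def IsLTop {L : Type*} [Order.Frame L] {X : Type*} (τ : Set (X → L)) : Prop :=
  (∀ S ⊆ τ, sSup S ∈ τ) ∧ ∀ S ⊆ τ, S.Finite → sInf S ∈ τ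

/-- `f` is continuous from `(X, τ)` to `(Y, δ)`. -/
def LCont {L : Type*} [Order.Frame L] {X Y : Type*}
    (τ : Set (X → L)) (δ : Set (Y → L)) (f : X → Y) : Prop :=
  ∀ ν ∈ δ, ν ∘ f ∈ τ

/-- The Sierpinski `L`-topology on `L`: generated by `id`, it consists of the constant
function `⊥`, the identity, and the constant function `⊤`. -/
def sierpinskiLTop (L : Type*) [Order.Frame L] : Set (L → L) :=
  {⊥, id, ⊤}

/-- `(X, τ)` is a T₀ `L`-topological space. -/
def IsT0LTop {L : Type*} [Order.Frame L] {X : Type*} (τ : Set (X → L)) : Prop :=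
  ∀ x y : X, x ≠ y → ∃ μ ∈ τ, μ x ≠ μ y

/-- `f : (X,τ) → (Y,δ)` is an embedding: `f` is injective and `τ = {ν ∘ f | ν ∈ δ}`. -/
def IsLEmbedding {L : Type*} [Order.Frame L] {X Y : Type*}
    (τ : Set (X → L)) (δ : Set (Y → L)) (f : X → Y) : Prop :=
  Function.Injective f ∧ τ = {μ | ∃ ν ∈ δ, μ = ν ∘ f}

/-- The smallest `L`-topology containing a family `ζ` of `L`-sets. -/
def genLTop {L : Type*} [Order.Frame L] {X : Type*} (ζ : Set (X → L)) : Set (X → L) :=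
  ⋂₀ {τ | IsLTop τ ∧ ζ ⊆ τ}

/-- The product `L`-topology on `∀ i, X i`: the smallest `L`-topology containing all
`ν ∘ pᵢ` with `ν ∈ τ i`. -/
def prodLTop {L : Type*} [Order.Frame L] {I : Type*} {X : I → Type*}
    (τ : ∀ i, Set (X i → L)) : Set ((∀ i, X i) → L) :=
  genLTop {μ | ∃ i, ∃ ν ∈ τ i, μ = fun x => ν (x i)}

/-- The product of `I` copies of the Sierpinski `L`-space, `L_S^I`. -/
def sierpinskiPow (L : Type*) [Order.Frame L] (I : Type*) : Set ((I → L) → L) :=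
  prodLTop fun _ : I => sierpinskiLTop L

/-- The subspace `L`-topology on `M ⊆ Y`: restrictions of members of `δ`. -/
def subLTop {L : Type*} [Order.Frame L] {Y : Type*} (δ : Set (Y → L)) (M : Set Y) :
    Set (↥M → L) :=
  {ν | ∃ μ ∈ δ, ν = fun y => μ y.1}

/-- Homeomorphism: a continuous bijection with continuous inverse. -/
def IsLHomeo {L : Type*} [Order.Frame L] {X Y : Type*}
    (τ : Set (X → L)) (δ : Set (Y → L)) (f : X → Y) : Prop :=
  LCont τ δ f ∧
    ∃ g : Y → X, LCont δ τ g ∧ Function.LeftInverse g f ∧ Function.RightInverse g f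

/-- Epimorphism in `L`-**Top₀**. -/
def IsLEpiT0 {L : Type*} [Order.Frame L] {X Y : Type*}
    (τ : Set (X → L)) (δ : Set (Y → L)) (f : X → Y) : Prop :=
  ∀ (Z : Type*) (Δ : Set (Z → L)), IsLTop Δ → IsT0LTop Δ →
    ∀ g h : Y → Z, LCont δ Δ g → LCont δ Δ h → g ∘ f = h ∘ f → g = h

/-- The `[ ]`-closure of `M` in `(Y, δ)`: the intersection of the equalizers of all pairs
of continuous maps into T₀ `L`-topological spaces that agree on `M`. -/
def brClosure {L : Type*} [Order.Frame L] {Y : Type*} (δ : Set (Y → L)) (M : Set Y) :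
    Set Y :=
  {y | ∀ (Z : Type*) (Δ : Set (Z → L)), IsLTop Δ → IsT0LTop Δ →
    ∀ g h : Y → Z, LCont δ Δ g → LCont δ Δ h → (∀ m ∈ M, g m = h m) → g y = h y}

/-- `p` is a frame homomorphism from the frame `τ` (ordered pointwise, with pointwise
suprema and finite infima) to `L`: it preserves arbitrary suprema and finite infima. -/
def IsLFrameHom {L : Type*} [Order.Frame L] {X : Type*} (τ : Set (X → L))
    (p : ↥τ → L) : Prop :=
  (∀ (S : Set (X → L)) (hS : S ⊆ τ) (h : sSup S ∈ τ),
    p ⟨sSup S, h⟩ = ⨆ μ : S, p ⟨μ.1, hS μ.2⟩) ∧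
  ∀ (S : Set (X → L)) (hS : S ⊆ τ), S.Finite → ∀ h : sInf S ∈ τ,
    p ⟨sInf S, h⟩ = ⨅ μ : S, p ⟨μ.1, hS μ.2⟩

/-- `pt_L(τ)`: the collection of frame homomorphisms `τ → L`. -/
def LPt {L : Type*} [Order.Frame L] {X : Type*} (τ : Set (X → L)) : Type _ :=
  {p : ↥τ → L // IsLFrameHom τ p}

/-- The `L`-topology `φ_L(τ) = {φ_L(μ) | μ ∈ τ}` on `pt_L(τ)`, where `φ_L(μ)(p) = p(μ)`. -/
def phiTop {L : Type*} [Order.Frame L] {X : Type*} (τ : Set (X → L)) :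
    Set (LPt τ → L) :=
  {ν | ∃ μ : ↥τ, ν = fun p => p.1 μ}

/-- `(X, τ)` is sober: every frame homomorphism `p : τ → L` is given by evaluation at a
unique point of `X`. -/
def IsLSober {L : Type*} [Order.Frame L] {X : Type*} (τ : Set (X → L)) : Prop :=
  ∀ p : ↥τ → L, IsLFrameHom τ p → ∃! x : X, ∀ μ : ↥τ, p μ = μ.1 x

/-- `η_X : X → pt_L(τ)`, `η_X(x)(μ) = μ(x)`. -/
def etaPt {L : Type*} [Order.Frame L] {X : Type*} (τ : Set (X → L)) (x : X) : LPt τ :=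
  ⟨fun μ => μ.1 x,
    ⟨fun S hS h => by simp [sSup_apply], fun S hS hfin h => by simp [sInf_apply]⟩⟩

/-- The image `f^→(μ)` of an `L`-set under a map. -/
def LImage {L : Type*} [Order.Frame L] {X Y : Type*} (f : X → Y) (μ : X → L) : Y → L :=
  fun y => ⨆ x ∈ f ⁻¹' {y}, μ x

/-- The T₀-identification relation: `x ~ y` iff `μ x = μ y` for all `μ ∈ τ`. -/
def t0Rel {L : Type*} [Order.Frame L] {X : Type*} (τ : Set (X → L)) (x y : X) : Prop :=
  ∀ μ ∈ τ, μ x = μ y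

/-- The quotient `X/~`. -/
def T0Quot {L : Type*} [Order.Frame L] {X : Type*} (τ : Set (X → L)) : Type _ :=
  Quot (t0Rel τ)

/-- The quotient map `q : X → X/~`. -/
def t0q {L : Type*} [Order.Frame L] {X : Type*} (τ : Set (X → L)) : X → T0Quot τ :=
  Quot.mk _

/-- The quotient `L`-topology on `X/~`. -/
def t0QuotTop {L : Type*} [Order.Frame L] {X : Type*} (τ : Set (X → L)) :
    Set (T0Quot τ → L) :=
  {ν | ν ∘ t0q τ ∈ τ}

/-- All finite pointwise infima of members of `ζ`. -/
def finInfs {L : Type*} [Order.Frame L] {X : Type*} (ζ : Set (X → L)) : Set (X → L) :=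
  {μ | ∃ F ⊆ ζ, F.Finite ∧ μ = sInf F}

/-- `⟨ζ⟩`: all pointwise suprema of sets of finite pointwise infima of members of `ζ`. -/
def genSupInf {L : Type*} [Order.Frame L] {X : Type*} (ζ : Set (X → L)) : Set (X → L) :=
  {μ | ∃ G ⊆ finInfs ζ, μ = sSup G}

/-! Since the `L`-sets `ν` with `ν ∘ f ∈ τ` form an `L`-topology, a map into `L_S^I` is
continuous as soon as its coordinates lie in `τ`; in particular the evaluation map is, and its
coordinates recover all of `τ`. T₀ passes back along injective continuous maps, and `L_S^I` is
T₀ because its points are separated by the projections. -/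

section LTopology

variable {L : Type*} [Order.Frame L] {X Y : Type*}

lemma IsLTop.bot_mem {τ : Set (X → L)} (hτ : IsLTop τ) : (⊥ : X → L) ∈ τ := by
  simpa using hτ.1 ∅ (Set.empty_subset _)

lemma IsLTop.top_mem {τ : Set (X → L)} (hτ : IsLTop τ) : (⊤ : X → L) ∈ τ := by
  simpa using hτ.2 ∅ (Set.empty_subset _) Set.finite_empty

lemma sSup_comp (S : Set (Y → L)) (f : X → Y) : sSup S ∘ f = sSup ((· ∘ f) '' S) := by
  rw [sSup_image]
  funext x
  simp [iSup_apply, sSup_eq_iSup]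

lemma sInf_comp (S : Set (Y → L)) (f : X → Y) : sInf S ∘ f = sInf ((· ∘ f) '' S) := by
  rw [sInf_image]
  funext x
  simp [iInf_apply, sInf_eq_iInf]

lemma IsLTop.comap {τ : Set (X → L)} (hτ : IsLTop τ) (f : X → Y) :
    IsLTop {ν : Y → L | ν ∘ f ∈ τ} := by
  refine ⟨fun S hS => ?_, fun S hS hfin => ?_⟩
  · show sSup S ∘ f ∈ τ
    rw [sSup_comp]
    exact hτ.1 _ (Set.image_subset_iff.2 hS)
  · show sInf S ∘ f ∈ τ
    rw [sInf_comp]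
    exact hτ.2 _ (Set.image_subset_iff.2 hS) (hfin.image _)

lemma subset_genLTop (ζ : Set (X → L)) : ζ ⊆ genLTop ζ :=
  fun _ hμ _ ht => ht.2 hμ

lemma genLTop_subset {ζ δ : Set (X → L)} (hδ : IsLTop δ) (hζ : ζ ⊆ δ) : genLTop ζ ⊆ δ :=
  Set.sInter_subset_of_mem ⟨hδ, hζ⟩

lemma lCont_genLTop {τ : Set (X → L)} (hτ : IsLTop τ) {ζ : Set (Y → L)} {f : X → Y}
    (hf : ∀ ν ∈ ζ, ν ∘ f ∈ τ) : LCont τ (genLTop ζ) f :=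
  fun _ hν => genLTop_subset (hτ.comap f) hf hν

lemma proj_mem_sierpinskiPow {I : Type*} (i : I) :
    (fun z : I → L => z i) ∈ sierpinskiPow L I :=
  subset_genLTop _ ⟨i, id, by simp [sierpinskiLTop], rfl⟩

lemma lCont_sierpinskiPow_iff {τ : Set (X → L)} (hτ : IsLTop τ) {I : Type*}
    {f : X → I → L} : LCont τ (sierpinskiPow L I) f ↔ ∀ i, (fun x => f x i) ∈ τ := by
  refine ⟨fun hf i => hf _ (proj_mem_sierpinskiPow i), fun hf => lCont_genLTop hτ ?_⟩
  rintro _ ⟨i, ν, hν, rfl⟩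
  rcases hν with rfl | rfl | rfl
  exacts [hτ.bot_mem, hf i, hτ.top_mem]

lemma isT0LTop_sierpinskiPow (I : Type*) : IsT0LTop (sierpinskiPow L I) := fun _ _ hzw =>
  have ⟨i, hi⟩ := Function.ne_iff.1 hzw
  ⟨_, proj_mem_sierpinskiPow i, hi⟩

lemma IsT0LTop.of_injective_lCont {τ : Set (X → L)} {δ : Set (Y → L)} (hδ : IsT0LTop δ)
    {f : X → Y} (hinj : Function.Injective f) (hf : LCont τ δ f) : IsT0LTop τ :=
  fun x y hxy =>
  have ⟨ν, hν, hne⟩ := hδ (f x) (f y) (hinj.ne hxy)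
  ⟨ν ∘ f, hf ν hν, hne⟩

lemma IsT0LTop.injective_eval {τ : Set (X → L)} (h0 : IsT0LTop τ) :
    Function.Injective (fun x (μ : ↥τ) => μ.1 x) := by
  intro x y hxy
  by_contra hne
  obtain ⟨μ, hμ, hμxy⟩ := h0 x y hne
  exact hμxy (congrFun hxy ⟨μ, hμ⟩)

lemma lCont_eval {τ : Set (X → L)} (hτ : IsLTop τ) :
    LCont τ (sierpinskiPow L ↥τ) (fun x (μ : ↥τ) => μ.1 x) :=
  (lCont_sierpinskiPow_iff hτ).2 fun μ => μ.2

lemma isLEmbedding_eval {τ : Set (X → L)} (hτ : IsLTop τ) (h0 : IsT0LTop τ) :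
    IsLEmbedding τ (sierpinskiPow L ↥τ) (fun x (μ : ↥τ) => μ.1 x) := by
  refine ⟨h0.injective_eval, Set.ext fun μ => ⟨fun hμ => ?_, ?_⟩⟩
  · exact ⟨_, proj_mem_sierpinskiPow (⟨μ, hμ⟩ : ↥τ), rfl⟩
  · rintro ⟨ν, hν, rfl⟩
    exact lCont_eval hτ ν hν

end LTopology

/-- `(X, τ)` is T₀ iff it embeds into a power `L_S^I` of the Sierpinski `L`-space;
moreover, when `(X, τ)` is T₀, the evaluation map `e(x)(μ) = μ(x)` is an embedding of
`(X, τ)` into `L_S^τ`. -/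
theorem stmt7 {L : Type u} [Order.Frame L] {X : Type v} (τ : Set (X → L))
    (hτ : IsLTop τ) :
    (IsT0LTop τ ↔
      ∃ (I : Type (max u v)) (f : X → I → L),
        LCont τ (sierpinskiPow L I) f ∧ IsLEmbedding τ (sierpinskiPow L I) f) ∧
    (IsT0LTop τ →
      LCont τ (sierpinskiPow L ↥τ) (fun x (μ : ↥τ) => μ.1 x) ∧
      IsLEmbedding τ (sierpinskiPow L ↥τ) (fun x (μ : ↥τ) => μ.1 x)) := by
  have eval_embeds (h0 : IsT0LTop τ) := And.intro (lCont_eval hτ) (isLEmbedding_eval hτ h0)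
  refine ⟨⟨fun h0 => ⟨↥τ, _, eval_embeds h0⟩, ?_⟩, eval_embeds⟩
  rintro ⟨I, f, hf, hinj, -⟩
  exact (isT0LTop_sierpinskiPow I).of_injective_lCont hinj hf
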